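/- There exists a function f : ℝ → ℝ that is continuous on all of ℝ but differentiable at no point. -/

import Mathlib

/-!
Van der Waerden's construction in base 4: with `d` the distance to the nearest integer, the
function `f x = ∑ 4⁻ᵏ d (4ᵏ x)` is a uniform limit of continuous functions. At a point `x`, take
`h = ±4⁻⁽ⁿ⁺¹⁾`, the sign chosen so that `4ᵏ x` and `4ᵏ (x + h)` lie in a common interval
`[m/2, (m+1)/2]` for every `k ≤ n`; there `d` is affine of slope `±1`. For `k > n` the shift
`4ᵏ h` is an integer, invisible to `d`. So `(f (x + h) - f x) / h` is a sum of `n + 1` signs: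
an integer of the parity of `n + 1`. These integer difference quotients change at every step,
hence cannot converge, although `h → 0`.
-/

open Filter Topology

lemma floor_pow_mul_eq_of_le {q k n : ℕ} (hq : q ≠ 0) (hkn : k ≤ n) {a b : ℝ}
    (h : ⌊(q : ℝ) ^ n * a⌋ = ⌊(q : ℝ) ^ n * b⌋) : ⌊(q : ℝ) ^ k * a⌋ = ⌊(q : ℝ) ^ k * b⌋ := by
  have hdiv (y : ℝ) : (q : ℝ) ^ k * y = (q : ℝ) ^ n * y / (q ^ (n - k) : ℕ) := by
    rw [← Nat.add_sub_cancel' hkn, pow_add]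
    push_cast
    field_simp
    simp
  rw [hdiv, hdiv, Int.floor_div_natCast, Int.floor_div_natCast, h]

lemma exists_floor_add_half_eq (y : ℝ) : ∃ σ : ℤ, (σ = 1 ∨ σ = -1) ∧ ⌊y + σ / 2⌋ = ⌊y⌋ := by
  have h₁ := Int.floor_le y
  have h₂ := Int.lt_floor_add_one y
  by_cases hy : y < ⌊y⌋ + 1 / 2
  · exact ⟨1, Or.inl rfl, Int.floor_eq_iff.mpr ⟨by push_cast; linarith, by push_cast; linarith⟩⟩
  · exact ⟨-1, Or.inr rfl, Int.floor_eq_iff.mpr ⟨by push_cast; linarith, by push_cast; linarith⟩⟩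

lemma exists_sum_eq_int_mul_of_forall_eq_or_eq_neg {ι : Type*} {s : Finset ι} {u : ι → ℝ} {h : ℝ}
    (hu : ∀ i ∈ s, u i = h ∨ u i = -h) : ∃ Z : ℤ, ∑ i ∈ s, u i = Z * h ∧ Z ≡ s.card [ZMOD 2] := by
  have hε : ∀ i ∈ s, ∃ ε : ℤ, ε ≡ 1 [ZMOD 2] ∧ u i = ε * h := by
    intro i hi
    rcases hu i hi with hi | hi
    · exact ⟨1, rfl, by simp [hi]⟩
    · exact ⟨-1, by decide, by simp [hi]⟩
  choose! ε hε_odd hε_eq using hε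
  refine ⟨∑ i ∈ s, ε i, ?_, ?_⟩
  · push_cast
    rw [Finset.sum_mul]
    exact Finset.sum_congr rfl hε_eq
  · simpa using Int.ModEq.sum hε_odd

lemma not_differentiableAt_of_int_slopes {f : ℝ → ℝ} {x : ℝ} {h : ℕ → ℝ} {Z : ℕ → ℤ}
    (h_ne : ∀ n, h n ≠ 0) (h_lim : Tendsto h atTop (𝓝 0))
    (h_slope : ∀ n, slope f x (x + h n) = Z n) (hZ : ∀ n, Z (n + 1) ≠ Z n) :
    ¬ DifferentiableAt ℝ f x := by
  intro hf
  have hx : Tendsto (fun n ↦ x + h n) atTop (𝓝[≠] x) :=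
    tendsto_nhdsWithin_of_tendsto_nhds_of_eventually_within _
      (by simpa using h_lim.const_add x) (Eventually.of_forall fun n ↦ by simpa using h_ne n)
  have hZ_lim : Tendsto (fun n ↦ (Z n : ℝ)) atTop (𝓝 (deriv f x)) := by
    simpa only [Function.comp_def, h_slope] using
      (hasDerivAt_iff_tendsto_slope.mp hf.hasDerivAt).comp hx
  obtain ⟨N, hN⟩ := Metric.cauchySeq_iff'.mp hZ_lim.cauchySeq 1 one_pos
  have hlt : |((Z (N + 1) - Z N : ℤ) : ℝ)| < 1 := by
    simpa [Real.dist_eq] using hN (N + 1) N.le_succ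
  have := Int.abs_lt_one_iff.mp (by exact_mod_cast hlt)
  exact hZ N (by omega)

noncomputable def sawtooth (y : ℝ) : ℝ := ‖(y : UnitAddCircle)‖

lemma sawtooth_nonneg (y : ℝ) : 0 ≤ sawtooth y := norm_nonneg _

lemma sawtooth_le_half (y : ℝ) : sawtooth y ≤ 1 / 2 := by
  simpa [sawtooth] using AddCircle.norm_le_half_period 1 (x := (y : UnitAddCircle)) one_ne_zero

lemma continuous_sawtooth : Continuous sawtooth :=
  continuous_norm.comp continuous_quotient_mk'

lemma sawtooth_add_intCast (y : ℝ) (m : ℤ) : sawtooth (y + m) = sawtooth y := by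
  have hm : ((m : ℝ) : UnitAddCircle) = 0 := (AddCircle.coe_eq_zero_iff 1).mpr ⟨m, by simp⟩
  rw [sawtooth, AddCircle.coe_add, hm, add_zero, sawtooth]

lemma sawtooth_eq_abs_sub {y : ℝ} {c : ℤ} (h : |y - c| ≤ 1 / 2) : sawtooth y = |y - c| := by
  conv_lhs => rw [← sub_add_cancel y c, sawtooth_add_intCast]
  rwa [sawtooth, AddCircle.norm_coe_eq_abs_iff 1 one_ne_zero, abs_one]

lemma sawtooth_eq_sub_intCast {y : ℝ} {c : ℤ} (h₀ : c ≤ y) (h₁ : y ≤ c + 1 / 2) :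
    sawtooth y = y - c := by
  rw [sawtooth_eq_abs_sub (c := c) (abs_le.mpr ⟨by linarith, by linarith⟩),
    abs_of_nonneg (by linarith)]

lemma sawtooth_eq_intCast_sub {y : ℝ} {c : ℤ} (h₀ : c - 1 / 2 ≤ y) (h₁ : y ≤ c) :
    sawtooth y = c - y := by
  rw [sawtooth_eq_abs_sub (c := c) (abs_le.mpr ⟨by linarith, by linarith⟩),
    abs_of_nonpos (by linarith), neg_sub]

lemma sawtooth_sub_eq_or_of_floor_eq {a b : ℝ} (hab : ⌊2 * a⌋ = ⌊2 * b⌋) :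
    sawtooth b - sawtooth a = b - a ∨ sawtooth b - sawtooth a = -(b - a) := by
  have ha₁ := Int.floor_le (2 * a)
  have ha₂ := Int.lt_floor_add_one (2 * a)
  have hb₁ := Int.floor_le (2 * b)
  have hb₂ := Int.lt_floor_add_one (2 * b)
  rw [← hab] at hb₁ hb₂
  obtain ⟨j, hj | hj⟩ := Int.even_or_odd' ⌊2 * a⌋ <;> rw [hj] at ha₁ ha₂ hb₁ hb₂ <;> push_cast at *
  · left
    rw [sawtooth_eq_sub_intCast (c := j) (by linarith) (by linarith),
      sawtooth_eq_sub_intCast (c := j) (by linarith) (by linarith)]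
    ring
  · right
    rw [sawtooth_eq_intCast_sub (c := j + 1) (by push_cast; linarith) (by push_cast; linarith),
      sawtooth_eq_intCast_sub (c := j + 1) (by push_cast; linarith) (by push_cast; linarith)]
    ring

noncomputable def vanDerWaerden (x : ℝ) : ℝ := ∑' k : ℕ, sawtooth (4 ^ k * x) / 4 ^ k

lemma norm_sawtooth_div_pow_le (y : ℝ) (k : ℕ) : ‖sawtooth y / 4 ^ k‖ ≤ (1 / 4) ^ k / 2 := by
  rw [Real.norm_of_nonneg (div_nonneg (sawtooth_nonneg y) (by positivity))]
  calc sawtooth y / 4 ^ k ≤ (1 / 2) / 4 ^ k := by gcongr; exact sawtooth_le_half y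
    _ = (1 / 4) ^ k / 2 := by rw [one_div_pow]; ring

lemma summable_quarter_pow_div_two : Summable fun k : ℕ ↦ ((1 : ℝ) / 4) ^ k / 2 :=
  (summable_geometric_of_lt_one (by norm_num) (by norm_num)).div_const 2

lemma summable_vanDerWaerden (x : ℝ) : Summable fun k : ℕ ↦ sawtooth (4 ^ k * x) / 4 ^ k :=
  summable_quarter_pow_div_two.of_norm_bounded fun k ↦ norm_sawtooth_div_pow_le _ k

lemma continuous_vanDerWaerden : Continuous vanDerWaerden :=
  continuous_tsum (fun _ ↦ (continuous_sawtooth.comp (continuous_const_mul _)).div_const _)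
    summable_quarter_pow_div_two fun k _ ↦ norm_sawtooth_div_pow_le _ k

lemma sawtooth_pow_mul_div_sub_eq_or {x y : ℝ} {k n : ℕ} (hkn : k ≤ n)
    (h : ⌊(4 : ℝ) ^ n * (2 * x)⌋ = ⌊(4 : ℝ) ^ n * (2 * y)⌋) :
    sawtooth (4 ^ k * y) / 4 ^ k - sawtooth (4 ^ k * x) / 4 ^ k = y - x ∨
      sawtooth (4 ^ k * y) / 4 ^ k - sawtooth (4 ^ k * x) / 4 ^ k = -(y - x) := by
  have hk : ⌊2 * (4 ^ k * x)⌋ = ⌊2 * (4 ^ k * y)⌋ := by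
    simpa only [Nat.cast_ofNat, mul_left_comm (2 : ℝ)] using
      floor_pow_mul_eq_of_le (q := 4) (by norm_num) hkn (by simpa only [Nat.cast_ofNat] using h)
  rw [← sub_div]
  rcases sawtooth_sub_eq_or_of_floor_eq hk with hd | hd
  · exact Or.inl (by rw [hd]; field_simp)
  · exact Or.inr (by rw [hd]; field_simp)

lemma exists_slope_vanDerWaerden_eq_int (x : ℝ) (n : ℕ) :
    ∃ h : ℝ, h ≠ 0 ∧ |h| = (1 / 4) ^ (n + 1) ∧
      ∃ Z : ℤ, slope vanDerWaerden x (x + h) = Z ∧ Z ≡ n + 1 [ZMOD 2] := by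
  obtain ⟨σ, hσ, h_floor⟩ := exists_floor_add_half_eq ((4 : ℝ) ^ n * (2 * x))
  set h : ℝ := σ / 4 ^ (n + 1) with h_def
  have h_abs : |h| = (1 / 4) ^ (n + 1) := by
    rcases hσ with rfl | rfl <;> simp [h_def, abs_div]
  have h_ne : h ≠ 0 := abs_pos.mp (h_abs ▸ by positivity)
  have h_tail (k : ℕ) (hk : n < k) : sawtooth (4 ^ k * (x + h)) = sawtooth (4 ^ k * x) := by
    have : (4 : ℝ) ^ k * (x + h) = 4 ^ k * x + ((σ * 4 ^ (k - (n + 1)) : ℤ) : ℝ) := by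
      rw [h_def, ← Nat.add_sub_cancel' (Nat.succ_le_of_lt hk)]
      push_cast
      rw [pow_add, Nat.add_sub_cancel_left]
      field_simp
    rw [this, sawtooth_add_intCast]
  have h_head (k : ℕ) (hk : k ∈ Finset.range (n + 1)) :
      sawtooth (4 ^ k * (x + h)) / 4 ^ k - sawtooth (4 ^ k * x) / 4 ^ k = h ∨
        sawtooth (4 ^ k * (x + h)) / 4 ^ k - sawtooth (4 ^ k * x) / 4 ^ k = -h := by
    have h_scale : (4 : ℝ) ^ n * (2 * (x + h)) = 4 ^ n * (2 * x) + σ / 2 := by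
      rw [h_def, pow_succ]
      field_simp
      ring
    simpa using sawtooth_pow_mul_div_sub_eq_or (Finset.mem_range_succ_iff.mp hk)
      (h_floor.symm.trans (congrArg _ h_scale).symm)
  have h_diff : vanDerWaerden (x + h) - vanDerWaerden x = ∑ k ∈ Finset.range (n + 1),
      (sawtooth (4 ^ k * (x + h)) / 4 ^ k - sawtooth (4 ^ k * x) / 4 ^ k) := by
    rw [vanDerWaerden, vanDerWaerden,
      ← (summable_vanDerWaerden (x + h)).tsum_sub (summable_vanDerWaerden x)]
    exact tsum_eq_sum fun k hk ↦ by rw [h_tail k (by simpa using hk), sub_self]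
  obtain ⟨Z, hZ, h_parity⟩ := exists_sum_eq_int_mul_of_forall_eq_or_eq_neg h_head
  refine ⟨h, h_ne, h_abs, Z, ?_, by simpa using h_parity⟩
  rw [slope_def_field, add_sub_cancel_left, h_diff, hZ, mul_div_cancel_right₀ _ h_ne]

theorem exists_continuous_nowhere_differentiable :
    ∃ f : ℝ → ℝ, Continuous f ∧ ∀ x : ℝ, ¬ DifferentiableAt ℝ f x := by
  refine ⟨vanDerWaerden, continuous_vanDerWaerden, fun x ↦ ?_⟩
  choose h h_ne h_abs Z h_slope h_parity using exists_slope_vanDerWaerden_eq_int x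
  have h_lim : Tendsto h atTop (𝓝 0) :=
    squeeze_zero_norm (fun n ↦ (h_abs n).le) <|
      (tendsto_pow_atTop_nhds_zero_of_lt_one (by norm_num) (by norm_num)).comp
        (tendsto_add_atTop_nat 1)
  refine not_differentiableAt_of_int_slopes h_ne h_lim h_slope fun n h_eq ↦ ?_
  have h_mod := (h_parity (n + 1)).symm.trans (h_eq ▸ h_parity n)
  simp only [Int.ModEq] at h_mod
  push_cast at h_mod
  omega
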